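/- arXiv:1811.12080 — 4 statements merged into one kernel-verified Lean document; each statement's English description precedes it below -/
import Mathlib

section
/- Let T be a bounded expansive operator on a Hilbert space H with Cauchy dual T' = T(T*T)^{-1}. If g ∈ H and λ ∈ ℂ with |λ| = 1 satisfy T'g = λg, then Tg = λg. -/
/-!
The Cauchy dual `T' = T S`, `S = (T*T)⁻¹`, of an expansive `T` is a contraction, since
`‖T' x‖² = re ⟪S x, x⟫ ≤ ‖S x‖ ‖x‖ ≤ ‖T' x‖ ‖x‖`. A unimodular eigenvector of a contraction is an
eigenvector of its adjoint for the conjugate eigenvalue; as `S`, a right inverse of the self-adjoint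
`T*T`, is self-adjoint, this reads `S T* g = T'* g = conj λ • g`. Applying
`T*T` gives `T*T g = λ T* g = T*T (S g)`, and as `ker (T*T) = ker T` this yields `T g = T S g = λ g`.
-/

open ContinuousLinearMap

theorem IsSelfAdjoint.of_mul_eq_one {R : Type*} [Monoid R] [StarMul R] {a b : R}
    (ha : IsSelfAdjoint a) (h : a * b = 1) : IsSelfAdjoint b :=
  calc star b = star b * (a * b) := by rw [h, mul_one]
    _ = star (a * b) * b := by rw [star_mul, ha.star_eq, mul_assoc]
    _ = b := by rw [h, star_one, one_mul]

namespace ContinuousLinearMap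

variable {𝕜 E F : Type*} [RCLike 𝕜] [NormedAddCommGroup E] [InnerProductSpace 𝕜 E]
  [CompleteSpace E] [NormedAddCommGroup F] [InnerProductSpace 𝕜 F] [CompleteSpace F]

theorem adjoint_apply_eq_self_of_apply_eq_self {C : E →L[𝕜] E} (hC : ‖C‖ ≤ 1) {g : E}
    (hg : C g = g) : adjoint C g = g := by
  refine eq_of_norm_le_re_inner_eq_norm_sq (𝕜 := 𝕜) ?_ ?_
  · simpa using (adjoint C).le_of_opNorm_le (c := 1) (by rwa [adjoint.norm_map]) g
  · rw [adjoint_inner_left, hg, inner_self_eq_norm_sq]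

theorem adjoint_apply_eq_conj_smul_of_apply_eq_smul {C : E →L[𝕜] E} (hC : ‖C‖ ≤ 1) {g : E}
    {lam : 𝕜} (hlam : ‖lam‖ = 1) (hg : C g = lam • g) :
    adjoint C g = starRingEnd 𝕜 lam • g := by
  have hconj : starRingEnd 𝕜 lam * lam = 1 := by simp [RCLike.conj_mul, hlam]
  have hfix := adjoint_apply_eq_self_of_apply_eq_self (C := starRingEnd 𝕜 lam • C)
    (by rwa [norm_smul, RCLike.norm_conj, hlam, one_mul])
    (by rw [smul_apply, hg, smul_smul, hconj, one_smul])
  rw [map_smulₛₗ, RCLike.conj_conj, smul_apply] at hfix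
  calc adjoint C g = (starRingEnd 𝕜 lam * lam) • adjoint C g := by rw [hconj, one_smul]
    _ = starRingEnd 𝕜 lam • g := by rw [mul_smul, hfix]

theorem norm_comp_le_one_of_le_norm_apply {T : E →L[𝕜] F} (hexp : ∀ x, ‖x‖ ≤ ‖T x‖)
    {S : E →L[𝕜] E} (hS : (adjoint T ∘L T) ∘L S = 1) : ‖T ∘L S‖ ≤ 1 := by
  refine opNorm_le_bound _ zero_le_one fun x ↦ ?_
  have hsq : ‖T (S x)‖ ^ 2 ≤ ‖T (S x)‖ * ‖x‖ :=
    calc ‖T (S x)‖ ^ 2 = RCLike.re (inner 𝕜 (S x) x) := by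
          rw [← inner_self_eq_norm_sq (𝕜 := 𝕜), ← adjoint_inner_right T (S x)]
          exact congr_arg (fun y ↦ RCLike.re (inner 𝕜 (S x) y)) (DFunLike.congr_fun hS x)
      _ ≤ ‖S x‖ * ‖x‖ := (RCLike.re_le_norm _).trans (norm_inner_le_norm _ _)
      _ ≤ ‖T (S x)‖ * ‖x‖ := by gcongr; exact hexp _
  rw [comp_apply, one_mul]
  nlinarith [norm_nonneg (T (S x)), norm_nonneg x]

end ContinuousLinearMap

theorem stmt_4_general {H : Type*} [NormedAddCommGroup H] [InnerProductSpace ℂ H]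
    [CompleteSpace H] (T : H →L[ℂ] H)
    (hexp : ∀ x : H, ‖x‖ ≤ ‖T x‖)
    (S : H →L[ℂ] H)
    (hS₁ : (adjoint T ∘L T) ∘L S = 1)
    (g : H) (lam : ℂ) (hlam : ‖lam‖ = 1)
    (hg : (T ∘L S) g = lam • g) : T g = lam • g := by
  have hinv : ∀ x, adjoint T (T (S x)) = x := DFunLike.congr_fun hS₁
  have hS_adj : adjoint S = S :=
    (IsSelfAdjoint.star_mul_self T).of_mul_eq_one (b := S)
      (by rwa [star_eq_adjoint, mul_def, mul_def])
  have hdual : S (adjoint T g) = starRingEnd ℂ lam • g := by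
    have hcontr := norm_comp_le_one_of_le_norm_apply hexp hS₁
    simpa [adjoint_comp, hS_adj] using adjoint_apply_eq_conj_smul_of_apply_eq_smul hcontr hlam hg
  have hTT : adjoint T (T g) = lam • adjoint T g :=
    calc adjoint T (T g) = (lam * starRingEnd ℂ lam) • adjoint T (T g) := by
          rw [RCLike.mul_conj, hlam, RCLike.ofReal_one, one_pow, one_smul]
      _ = lam • adjoint T (T (S (adjoint T g))) := by rw [hdual, mul_smul, map_smul, map_smul]
      _ = lam • adjoint T g := by rw [hinv]
  have hker : S g - g ∈ (adjoint T ∘L T : H →ₗ[ℂ] H).ker := by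
    rw [LinearMap.mem_ker, coe_coe, comp_apply, map_sub, map_sub, ← comp_apply T S, hg, map_smul,
      hTT, sub_self]
  rw [ker_adjoint_comp_self, LinearMap.mem_ker, coe_coe, map_sub, sub_eq_zero] at hker
  rw [← hker]
  exact hg

theorem stmt_4 {H : Type*} [NormedAddCommGroup H] [InnerProductSpace ℂ H]
    [CompleteSpace H] (T : H →L[ℂ] H)
    (hexp : ∀ x : H, ‖x‖ ≤ ‖T x‖)
    (S : H →L[ℂ] H)
    (hS₁ : (adjoint T ∘L T) ∘L S = 1) (hS₂ : S ∘L (adjoint T ∘L T) = 1)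
    (g : H) (lam : ℂ) (hlam : ‖lam‖ = 1)
    (hg : (T ∘L S) g = lam • g) : T g = lam • g :=
  stmt_4_general T hexp S hS₁ g lam hlam hg
end

section
/- Let T be an analytic bounded expansive operator on a Hilbert space H whose spectrum is contained in the closed unit disc, and suppose the Cauchy dual T' has a finite-dimensional nonzero invariant subspace M on which T' restricts to an invertible operator. Then T' restricted to M has an eigenvector g with eigenvalue λ of modulus 1, and then Tg = λg, contradicting analyticity; hence no such nonzero finite-dimensional M exists. In particular, the hyper-range of T' is either zero or infinite-dimensional. -/
/-!
If `T' g = μ g` with `g ≠ 0`, where `T' = T S` and `S = (T* T)⁻¹`, then `T* g = μ⁻¹ g` because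
`T* T' = 1`, so `conj μ⁻¹ ∈ σ(T)` and `|μ| ≥ 1`; since `T'` is a contraction, `|μ| = 1`. Hence
`Re ⟪g, S g⟫ = ‖T' g‖² = ‖g‖²` while `‖S g‖ ≤ ‖T S g‖ = ‖g‖`: the equality case of
Cauchy–Schwarz gives `S g = g`, so `T g = μ g` and `g ∈ ⋂ₙ Tⁿ(H) = 0`. A nonzero
finite-dimensional `T'`-invariant subspace, such as a finite-dimensional hyper-range of `T'`,
would contain such an eigenvector.
-/

open ContinuousLinearMap

namespace ContinuousLinearMap

section Module

variable {𝕜 E : Type*} [TopologicalSpace E] [AddCommGroup E]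

theorem mem_spectrum_of_apply_eq_smul [CommRing 𝕜] [Module 𝕜 E] [IsTopologicalAddGroup E]
    [ContinuousConstSMul 𝕜 E] {A : E →L[𝕜] E} {c : 𝕜} {x : E} (hx : x ≠ 0)
    (h : A x = c • x) : c ∈ spectrum 𝕜 A := by
  rw [spectrum.mem_iff]
  rintro ⟨u, hu⟩
  have hux : (u : E →L[𝕜] E) x = 0 := by
    simp [hu, h, Algebra.algebraMap_eq_smul_one]
  have hinv := congr($(u.inv_mul) x)
  rw [mul_apply_eq_comp, hux, map_zero, one_apply_eq_self] at hinv
  exact hx hinv.symm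

theorem mem_iInter_range_pow_of_apply_eq_smul [DivisionRing 𝕜] [Module 𝕜 E] {A : E →L[𝕜] E} {c : 𝕜} {x : E} (hc : c ≠ 0)
    (h : A x = c • x) : x ∈ ⋂ n : ℕ, Set.range ⇑(A ^ n) := by
  have hpow : ∀ n : ℕ, (A ^ n) x = c ^ n • x := by
    intro n
    induction n with
    | zero => simp
    | succ n ih => rw [pow_succ, mul_apply_eq_comp, h, map_smul, ih, smul_smul, ← pow_succ']
  refine Set.mem_iInter.2 fun n => ⟨(c ^ n)⁻¹ • x, ?_⟩
  rw [map_smul, hpow, smul_smul, inv_mul_cancel₀ (pow_ne_zero n hc), one_smul]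

end Module

end ContinuousLinearMap

theorem Module.End.mapsTo_iInf_range_pow {R M : Type*} [Semiring R] [AddCommMonoid M]
    [Module R M] (A : Module.End R M) :
    ∀ x ∈ ⨅ n : ℕ, LinearMap.range (A ^ n), A x ∈ ⨅ n : ℕ, LinearMap.range (A ^ n) := by
  simp only [Submodule.mem_iInf, LinearMap.mem_range]
  intro x hx n
  obtain ⟨w, rfl⟩ := hx n
  exact ⟨A w, by rw [← Module.End.mul_apply, ← pow_succ, pow_succ', Module.End.mul_apply]⟩

theorem Module.End.exists_eigenvector_mem_of_invariant {K V : Type*} [Field K] [IsAlgClosed K]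
    [AddCommGroup V] [Module K V] (A : V →ₗ[K] V) (M : Submodule K V) [FiniteDimensional K M]
    (hM : M ≠ ⊥) (hA : ∀ x ∈ M, A x ∈ M) : ∃ c : K, ∃ x ∈ M, x ≠ 0 ∧ A x = c • x := by
  have : Nontrivial M := Submodule.nontrivial_iff_ne_bot.mpr hM
  obtain ⟨c, hc⟩ := Module.End.exists_eigenvalue (A.restrict hA)
  obtain ⟨x, hx⟩ := hc.exists_hasEigenvector
  refine ⟨c, x, x.2, by simpa using hx.2, ?_⟩
  simpa using congr(Subtype.val $(hx.apply_eq_smul))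

section InnerProductSpace

open RCLike

variable {𝕜 H : Type*} [RCLike 𝕜] [NormedAddCommGroup H] [InnerProductSpace 𝕜 H]

theorem eq_of_norm_le_of_re_inner_eq_norm_sq {x y : H} (hle : ‖y‖ ≤ ‖x‖)
    (h : re (inner 𝕜 x y) = ‖x‖ ^ 2) : y = x := by
  have : ‖y - x‖ ^ 2 ≤ 0 := by
    rw [norm_sub_sq (𝕜 := 𝕜), inner_re_symm, h]
    nlinarith [norm_nonneg y]
  rw [← sub_eq_zero, ← norm_eq_zero]
  nlinarith [norm_nonneg (y - x)]

variable [CompleteSpace H] {T S : H →L[𝕜] H}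

theorem ContinuousLinearMap.star_mem_spectrum_of_adjoint_apply_eq_smul {A : H →L[𝕜] H} {c : 𝕜}
    {x : H} (hx : x ≠ 0) (h : adjoint A x = c • x) : star c ∈ spectrum 𝕜 A := by
  have : c ∈ spectrum 𝕜 (star A) := mem_spectrum_of_apply_eq_smul hx h
  rwa [spectrum.map_star] at this

theorem adjoint_apply_cauchyDual (hS : (adjoint T ∘L T) ∘L S = 1) (x : H) :
    adjoint T (T (S x)) = x :=
  congr($hS x)

theorem re_inner_self_apply_cauchyDual (hS : (adjoint T ∘L T) ∘L S = 1) (x : H) :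
    re (inner 𝕜 x (S x)) = ‖T (S x)‖ ^ 2 := by
  rw [← inner_self_eq_norm_sq (𝕜 := 𝕜), ← adjoint_inner_left T (S x) (T (S x)),
    adjoint_apply_cauchyDual hS]

theorem norm_apply_cauchyDual_le (hexp : ∀ x : H, ‖x‖ ≤ ‖T x‖)
    (hS : (adjoint T ∘L T) ∘L S = 1) (x : H) : ‖T (S x)‖ ≤ ‖x‖ := by
  have : ‖T (S x)‖ ^ 2 ≤ ‖x‖ * ‖T (S x)‖ :=
    calc ‖T (S x)‖ ^ 2 = re (inner 𝕜 x (S x)) := (re_inner_self_apply_cauchyDual hS x).symm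
      _ ≤ ‖x‖ * ‖S x‖ := re_inner_le_norm x (S x)
      _ ≤ ‖x‖ * ‖T (S x)‖ := by gcongr; exact hexp (S x)
  nlinarith [norm_nonneg x, norm_nonneg (T (S x))]

theorem apply_eq_self_of_norm_apply_cauchyDual_eq (hexp : ∀ x : H, ‖x‖ ≤ ‖T x‖)
    (hS : (adjoint T ∘L T) ∘L S = 1) {g : H} (hg : ‖T (S g)‖ = ‖g‖) : S g = g :=
  eq_of_norm_le_of_re_inner_eq_norm_sq (hg ▸ hexp (S g))
    (hg ▸ re_inner_self_apply_cauchyDual hS g)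

theorem eq_zero_of_apply_cauchyDual_eq_smul (hexp : ∀ x : H, ‖x‖ ≤ ‖T x‖)
    (hanalytic : (⋂ n : ℕ, Set.range ⇑(T ^ n)) = {0})
    (hspec : spectrum 𝕜 T ⊆ Metric.closedBall 0 1) (hS : (adjoint T ∘L T) ∘L S = 1)
    {μ : 𝕜} {g : H} (h : T (S g) = μ • g) : g = 0 := by
  by_contra hg
  have hadj : μ • adjoint T g = g := by
    simpa [h] using adjoint_apply_cauchyDual hS g
  have hμ : μ ≠ 0 := by
    rintro rfl
    exact hg (by simpa using hadj.symm)
  have hμ_ge : 1 ≤ ‖μ‖ := by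
    have hmem := hspec <|
      star_mem_spectrum_of_adjoint_apply_eq_smul hg ((eq_inv_smul_iff₀ hμ).2 hadj)
    rw [mem_closedBall_zero_iff, norm_star, norm_inv] at hmem
    exact (inv_le_one₀ (norm_pos_iff.2 hμ)).1 hmem
  have hμ_le : ‖μ‖ ≤ 1 := by
    have := norm_apply_cauchyDual_le hexp hS g
    rw [h, norm_smul] at this
    exact (mul_le_iff_le_one_left (norm_pos_iff.2 hg)).1 this
  have hSg : S g = g := apply_eq_self_of_norm_apply_cauchyDual_eq hexp hS <| by
    rw [h, norm_smul, le_antisymm hμ_le hμ_ge, one_mul]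
  rw [hSg] at h
  have hmem := mem_iInter_range_pow_of_apply_eq_smul hμ h
  rw [hanalytic] at hmem
  exact hg hmem

end InnerProductSpace

theorem stmt_5_general {H : Type*} [NormedAddCommGroup H] [InnerProductSpace ℂ H]
    [CompleteSpace H] (T : H →L[ℂ] H)
    (hexp : ∀ x : H, ‖x‖ ≤ ‖T x‖)
    (hanalytic : (⋂ n : ℕ, Set.range ⇑(T ^ n)) = {0})
    (hspec : spectrum ℂ T ⊆ Metric.closedBall 0 1)
    (S : H →L[ℂ] H)
    (hS₁ : (adjoint T ∘L T) ∘L S = 1) :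
    (∀ M : Submodule ℂ H, FiniteDimensional ℂ M →
        (∀ x ∈ M, (T ∘L S) x ∈ M) →
        (Set.InjOn ⇑(T ∘L S) M) →
        (∀ y ∈ M, ∃ x ∈ M, (T ∘L S) x = y) →
        M = ⊥) ∧
      ((⨅ n : ℕ, LinearMap.range (((T ∘L S) ^ n) : H →ₗ[ℂ] H)) = ⊥ ∨
        ¬ FiniteDimensional ℂ
          (⨅ n : ℕ, LinearMap.range (((T ∘L S) ^ n) : H →ₗ[ℂ] H) : Submodule ℂ H)) := by
  have eq_bot : ∀ M : Submodule ℂ H, FiniteDimensional ℂ M →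
      (∀ x ∈ M, (T ∘L S) x ∈ M) → M = ⊥ := by
    intro M _ hM
    by_contra hne
    obtain ⟨μ, g, -, hg, hμ⟩ :=
      Module.End.exists_eigenvector_mem_of_invariant (T ∘L S : H →ₗ[ℂ] H) M hne hM
    exact hg (eq_zero_of_apply_cauchyDual_eq_smul hexp hanalytic hspec hS₁ hμ)
  refine ⟨fun M hfin hM _ _ => eq_bot M hfin hM, ?_⟩
  rw [or_iff_not_imp_right, not_not]
  exact fun hfin => eq_bot _ hfin (Module.End.mapsTo_iInf_range_pow _)

theorem stmt_5 {H : Type*} [NormedAddCommGroup H] [InnerProductSpace ℂ H]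
    [CompleteSpace H] (T : H →L[ℂ] H)
    (hexp : ∀ x : H, ‖x‖ ≤ ‖T x‖)
    (hanalytic : (⋂ n : ℕ, Set.range ⇑(T ^ n)) = {0})
    (hspec : spectrum ℂ T ⊆ Metric.closedBall 0 1)
    (S : H →L[ℂ] H)
    (hS₁ : (adjoint T ∘L T) ∘L S = 1) (hS₂ : S ∘L (adjoint T ∘L T) = 1) :
    (∀ M : Submodule ℂ H, FiniteDimensional ℂ M →
        (∀ x ∈ M, (T ∘L S) x ∈ M) →
        (Set.InjOn ⇑(T ∘L S) M) →
        (∀ y ∈ M, ∃ x ∈ M, (T ∘L S) x = y) →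
        M = ⊥) ∧
      ((⨅ n : ℕ, LinearMap.range (((T ∘L S) ^ n) : H →ₗ[ℂ] H)) = ⊥ ∨
        ¬ FiniteDimensional ℂ
          (⨅ n : ℕ, LinearMap.range (((T ∘L S) ^ n) : H →ₗ[ℂ] H) : Submodule ℂ H)) :=
  stmt_5_general T hexp hanalytic hspec S hS₁
end

section
/- Let φ : W → W be a surjective map on a countable set W such that every fiber φ^{-1}(w) is finite, and let λ : W → (0,∞) with inf λ > 0 and sup over w of Σ_{u ∈ φ^{-1}(w)} λ(u)² finite. Define C on ℓ²(W) by (Cf)(w) = λ(w) f(φ(w)). Then for every positive integer k and every f ∈ ℓ²(W): f is in the range of C^k if and only if for every w ∈ W, the function u ↦ f(u)/λ^{(k)}(u) is constant on φ^{-k}(w), where λ^{(k)}(u) = λ(u)·λ(φ(u))···λ(φ^{k-1}(u)). -/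
theorem stmt_14 {W : Type*} [Countable W]
    (φ : W → W) (hsurj : Function.Surjective φ)
    (hfib : ∀ w : W, (φ ⁻¹' {w}).Finite)
    (lam : W → ℝ) (hpos : ∀ w, 0 < lam w)
    (hinf : ∃ c : ℝ, 0 < c ∧ ∀ w, c ≤ lam w)
    (hbdd : ∃ B : ℝ, ∀ w : W, ∑ u ∈ (hfib w).toFinset, (lam u) ^ 2 ≤ B)
    (C : lp (fun _ : W => ℂ) 2 →L[ℂ] lp (fun _ : W => ℂ) 2)
    (hC : ∀ (f : lp (fun _ : W => ℂ) 2) (w : W), (C f) w = (lam w : ℂ) * f (φ w)) :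
    ∀ k : ℕ, 0 < k → ∀ f : lp (fun _ : W => ℂ) 2,
      (∃ g, (C ^ k) g = f) ↔
        ∀ w u v : W, φ^[k] u = w → φ^[k] v = w →
          (f u : ℂ) / (∏ i ∈ Finset.range k, (lam (φ^[i] u) : ℂ)) =
            (f v : ℂ) / (∏ i ∈ Finset.range k, (lam (φ^[i] v) : ℂ)) := by
  intro k hk f
  obtain ⟨c, hc, hcle⟩ := hinf
  -- real product and its positivity
  set Λ : W → ℝ := fun w => ∏ i ∈ Finset.range k, lam (φ^[i] w) with hΛ
  have hΛpos : ∀ w, 0 < Λ w := fun w =>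
    Finset.prod_pos fun i _ => hpos _
  have hΛge : ∀ w, c ^ k ≤ Λ w := by
    intro w
    calc c ^ k = ∏ _i ∈ Finset.range k, c := by simp
    _ ≤ Λ w := Finset.prod_le_prod (fun _ _ => hc.le) (fun i _ => hcle _)
  have hΛcast : ∀ w, ((Λ w : ℝ) : ℂ) = ∏ i ∈ Finset.range k, (lam (φ^[i] w) : ℂ) := by
    intro w; push_cast [hΛ]; ring
  have hΛne : ∀ w, ((Λ w : ℝ) : ℂ) ≠ 0 := fun w => by
    exact_mod_cast (hΛpos w).ne'
  -- key formula for powers of C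
  have key : ∀ (n : ℕ) (g : lp (fun _ : W => ℂ) 2) (w : W),
      ((C ^ n) g) w = (∏ i ∈ Finset.range n, (lam (φ^[i] w) : ℂ)) * g (φ^[n] w) := by
    intro n
    induction n with
    | zero => intro g w; simp
    | succ n ih =>
      intro g w
      have h1 : (C ^ (n + 1)) g = C ((C ^ n) g) := by
        rw [pow_succ']; rfl
      rw [h1, hC, ih, Finset.prod_range_succ']
      simp only [Function.iterate_succ_apply, Function.iterate_zero_apply]
      ring
  constructor
  · rintro ⟨g, hg⟩ w u v hu hv
    have hfu : (f u : ℂ) = (∏ i ∈ Finset.range k, (lam (φ^[i] u) : ℂ)) * g w := by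
      rw [← hg, key, hu]
    have hfv : (f v : ℂ) = (∏ i ∈ Finset.range k, (lam (φ^[i] v) : ℂ)) * g w := by
      rw [← hg, key, hv]
    rw [hfu, hfv, ← hΛcast, ← hΛcast,
      mul_div_cancel_left₀ _ (hΛne u), mul_div_cancel_left₀ _ (hΛne v)]
  · intro hconst
    have hsurjk : Function.Surjective (φ^[k]) := Function.Surjective.iterate hsurj k
    choose u hu using hsurjk
    have huinj : Function.Injective u := by
      intro a b hab
      rw [← hu a, ← hu b, hab]
    set g : W → ℂ := fun w => f (u w) / ((Λ (u w) : ℝ) : ℂ) with hgdef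
    have hck : 0 < c ^ k := pow_pos hc k
    have hgmem : Memℓp g 2 := by
      apply memℓp_gen
      have hfs : Summable fun w : W => ‖f w‖ ^ (ENNReal.toReal 2) :=
        (memℓp_gen_iff (by norm_num)).1 (lp.memℓp f)
      have hfc : Summable fun w : W => ‖f (u w)‖ ^ (ENNReal.toReal 2) :=
        hfs.comp_injective huinj
      have : Summable fun w : W => ((c ^ k)⁻¹) ^ (ENNReal.toReal 2) *
          ‖f (u w)‖ ^ (ENNReal.toReal 2) := hfc.mul_left _
      refine this.of_nonneg_of_le (fun w => ?_) (fun w => ?_)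
      · positivity
      · rw [← Real.mul_rpow (by positivity) (by positivity)]
        apply Real.rpow_le_rpow (by positivity) ?_ (by norm_num)
        rw [hgdef]
        simp only [norm_div, Complex.norm_real, Real.norm_eq_abs,
          abs_of_pos (hΛpos (u w))]
        rw [div_eq_inv_mul]
        exact mul_le_mul_of_nonneg_right (inv_anti₀ hck (hΛge _)) (norm_nonneg _)
    refine ⟨⟨g, hgmem⟩, ?_⟩
    apply lp.ext
    funext w
    have hcoe : ∀ x : W, ((⟨g, hgmem⟩ : lp (fun _ : W => ℂ) 2) : ∀ _ : W, ℂ) x = g x :=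
      fun x => rfl
    rw [key, hcoe]
    have := hconst (φ^[k] w) (u (φ^[k] w)) w (hu _) rfl
    rw [hgdef]
    simp only
    rw [hΛcast, this, ← hΛcast, mul_div_cancel₀ _ (hΛne w)]
end

section
/- Let T be a bounded expansive operator (T*T ≥ I) on a Hilbert space H whose restriction to a closed invariant subspace M is invertible and is an isometry on M (for instance when T|_M is both expansive and has spectrum in the unit circle with ‖T x‖ = ‖x‖ for x ∈ M). If T|_M is unitary on M, then M reduces T, i.e., M is also invariant under T*. -/
/-!
Expansivity says exactly that `T† T - 1` is a positive operator. Its quadratic form vanishes at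
every `y` on which `T` preserves the norm, and a positive operator kills every vector at which
its quadratic form vanishes; hence `T† (T y) = y` for `y ∈ M`. Since `T` maps `M` onto `M`,
every `x ∈ M` is such a `T y`, and `T† x = y ∈ M`.
-/

open ContinuousLinearMap

namespace ContinuousLinearMap

open RCLike

variable {𝕜 E : Type*} [RCLike 𝕜] [NormedAddCommGroup E] [InnerProductSpace 𝕜 E]

local notation "⟪" x ", " y "⟫" => @inner 𝕜 _ _ x y

theorem IsPositive.apply_eq_zero_of_re_inner_eq_zero {A : E →L[𝕜] E} (hA : A.IsPositive)
    {x : E} (hx : re ⟪A x, x⟫ = 0) : A x = 0 := by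
  -- positivity along the line `x + t • A x` is a quadratic in `t` with no constant term
  have hquad : ∀ t : ℝ, 0 ≤ re ⟪A (A x), A x⟫ * (t * t) + 2 * ‖A x‖ ^ 2 * t + 0 := by
    intro t
    have h := hA.re_inner_nonneg_left (x + (t : 𝕜) • A x)
    have hsymm : ⟪A (A x), x⟫ = ⟪A x, A x⟫ := hA.inner_left_eq_inner_right _ _
    simp only [map_add, map_smul, inner_add_left, inner_add_right, inner_smul_left,
      inner_smul_right, hsymm, hx] at h
    simp only [inner_self_eq_norm_sq_to_K, conj_ofReal, mul_add, map_add, re_ofReal_mul,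
      ← ofReal_pow, ofReal_re] at h
    linear_combination h
  have hdiscrim := discrim_le_zero hquad
  simp only [discrim] at hdiscrim
  have hnorm_sq : ‖A x‖ ^ 2 = 0 := by nlinarith [sq_nonneg (‖A x‖ ^ 2)]
  simpa using hnorm_sq

variable [CompleteSpace E]

theorem re_inner_adjoint_comp_self_sub_one_apply (T : E →L[𝕜] E) (x : E) :
    re ⟪(adjoint T ∘L T - 1) x, x⟫ = ‖T x‖ ^ 2 - ‖x‖ ^ 2 := by
  rw [sub_apply, comp_apply, one_apply_eq_self, inner_sub_left, map_sub, adjoint_inner_left,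
    inner_self_eq_norm_sq, inner_self_eq_norm_sq]

theorem isPositive_adjoint_comp_self_sub_one {T : E →L[𝕜] E} (hT : ∀ x, ‖x‖ ≤ ‖T x‖) :
    (adjoint T ∘L T - 1).IsPositive := by
  refine isPositive_def'.2
    ⟨(isPositive_adjoint_comp_self T).isSelfAdjoint.sub (.one _), fun x => ?_⟩
  rw [reApplyInnerSelf_apply, re_inner_adjoint_comp_self_sub_one_apply, sub_nonneg]
  gcongr
  exact hT x

theorem adjoint_apply_apply_eq_of_norm_apply_eq {T : E →L[𝕜] E} (hT : ∀ x, ‖x‖ ≤ ‖T x‖)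
    {y : E} (hy : ‖T y‖ = ‖y‖) : adjoint T (T y) = y := by
  have h := (isPositive_adjoint_comp_self_sub_one hT).apply_eq_zero_of_re_inner_eq_zero
    (x := y) (by rw [re_inner_adjoint_comp_self_sub_one_apply, hy, sub_self])
  rwa [sub_apply, comp_apply, one_apply_eq_self, sub_eq_zero] at h

end ContinuousLinearMap

theorem stmt_18_general {H : Type*} [NormedAddCommGroup H] [InnerProductSpace ℂ H]
    [CompleteSpace H] (T : H →L[ℂ] H)
    (hexp : ∀ x : H, ‖x‖ ≤ ‖T x‖)
    (M : Submodule ℂ H)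
    (hTM : ⇑T '' (M : Set H) = (M : Set H))
    (hiso : ∀ x ∈ M, ‖T x‖ = ‖x‖) :
    ∀ x ∈ M, adjoint T x ∈ M := by
  intro x hx
  obtain ⟨y, hyM, rfl⟩ : x ∈ ⇑T '' (M : Set H) := hTM.symm ▸ hx
  rwa [adjoint_apply_apply_eq_of_norm_apply_eq hexp (hiso y hyM)]

theorem stmt_18 {H : Type*} [NormedAddCommGroup H] [InnerProductSpace ℂ H]
    [CompleteSpace H] (T : H →L[ℂ] H)
    (hexp : ∀ x : H, ‖x‖ ≤ ‖T x‖)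
    (M : Submodule ℂ H) (hclosed : IsClosed (M : Set H))
    (hTM : ⇑T '' (M : Set H) = (M : Set H))
    (hiso : ∀ x ∈ M, ‖T x‖ = ‖x‖) :
    ∀ x ∈ M, adjoint T x ∈ M :=
  stmt_18_general T hexp M hTM hiso
end
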